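/- Let w be a weight on ℝ such that log w is locally integrable, and let {λ_I}_{I∈D} be a sequence of nonnegative numbers for which there exists Q > 0 with (1/|J|) Σ_{I∈D(J)} λ_I ≤ Q for every dyadic interval J ∈ D. Then for every J ∈ D: (1/|J|) Σ_{I∈D(J)} exp(m_I(log w)) · λ_I ≤ 4Q · m_J w. Consequently, if in addition [w]_{A_∞^d} < ∞, then for every J ∈ D: (1/|J|) Σ_{I∈D(J)} m_I w · λ_I ≤ 4Q · [w]_{A_∞^d} · m_J w. -/

import Mathlib

/-!
Jensen's inequality for `exp` gives `exp (m_I log w) ≤ (m_I √w)²`, so the first claim is the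
dyadic Carleson embedding `Σ_{I ∈ D(J)} λ_I (m_I g)² ≤ 4Q ∫_J g²` for `g = √w`, and the second
follows from the first because `m_I w ≤ [w]_{A∞} exp (m_I log w)`.

The embedding (normalized to `Q = 1`) comes from the Bellman function
`B(|J|, ∫_J g, ∫_J g², S) = 4 ∫_J g² - 4 (∫_J g)² / (|J| + S)`: by induction on the depth of `F`,
`Σ_{I ∈ F} λ_I (m_I g)² ≤ B(|J|, ∫_J g, ∫_J g², Σ_{I ∈ F} λ_I)`. In the inductive step the two
halves of `J` are combined by `(a + b)² / (p + q) ≤ a² / p + b² / q`, and the extra term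
`λ_J (m_J g)²` is absorbed because `Σ_{I ∈ F} λ_I ≤ |J|` keeps both denominators below `2 |J|`.
-/

open MeasureTheory Set

/-- The dyadic interval `[2^j k, 2^j (k+1))` indexed by `(j, k)`. -/
abbrev DI := ℤ × ℤ

noncomputable def DIset (I : DI) : Set ℝ :=
  Set.Ico ((2:ℝ)^I.1 * I.2) ((2:ℝ)^I.1 * (I.2 + 1))

noncomputable def DIlen (I : DI) : ℝ := (2:ℝ)^I.1

/-- The left half `I⁺` of a dyadic interval. -/
def DIleft (I : DI) : DI := (I.1 - 1, 2 * I.2)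

/-- The right half `I⁻` of a dyadic interval. -/
def DIright (I : DI) : DI := (I.1 - 1, 2 * I.2 + 1)

/-- `I ∈ D(J)`: `I` is a dyadic subinterval of `J`. -/
def DIsub (I J : DI) : Prop := DIset I ⊆ DIset J

/-- `m_I f`, the average of `f` over `I`. -/
noncomputable def avg (f : ℝ → ℝ) (I : DI) : ℝ := (DIlen I)⁻¹ * ∫ x in DIset I, f x

/-- The `L²`-normalized Haar function of `I`. -/
noncomputable def haar (I : DI) : ℝ → ℝ := fun x =>
  (Real.sqrt (DIlen I))⁻¹ *
    ((DIset (DIleft I)).indicator (fun _ => (1:ℝ)) x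
      - (DIset (DIright I)).indicator (fun _ => (1:ℝ)) x)

/-- `⟨f, h_I⟩`. -/
noncomputable def haarCoef (f : ℝ → ℝ) (I : DI) : ℝ := ∫ x, f x * haar I x

/-- A weight: measurable, a.e. positive, locally integrable. -/
def IsWeight (w : ℝ → ℝ) : Prop :=
  Measurable w ∧ (∀ᵐ x ∂(volume : Measure ℝ), 0 < w x) ∧ LocallyIntegrable w volume

/-- The measure `w dx`. -/
noncomputable def wMeasure (w : ℝ → ℝ) : Measure ℝ :=
  volume.withDensity (fun x => ENNReal.ofReal (w x))

/-- `Δ_I f = m_{I⁺} f − m_{I⁻} f`. -/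
noncomputable def deltaAvg (f : ℝ → ℝ) (I : DI) : ℝ := avg f (DIleft I) - avg f (DIright I)

lemma DIlen_pos (I : DI) : 0 < DIlen I := zpow_pos two_pos _

lemma DIlen_left (J : DI) : DIlen (DIleft J) = DIlen J / 2 := by
  rw [DIlen, DIlen, DIleft, zpow_sub₀ two_ne_zero, zpow_one]

lemma DIlen_right (J : DI) : DIlen (DIright J) = DIlen J / 2 := DIlen_left J

lemma DIset_eq_Ico (I : DI) :
    DIset I = Ico ((2:ℝ)^I.1 * I.2) ((2:ℝ)^I.1 * I.2 + DIlen I) := by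
  rw [DIset, DIlen, mul_add, mul_one]

lemma DIset_left (J : DI) :
    DIset (DIleft J) = Ico ((2:ℝ)^J.1 * J.2) ((2:ℝ)^J.1 * J.2 + DIlen J / 2) := by
  rw [DIset_eq_Ico, DIlen_left, DIleft, zpow_sub₀ two_ne_zero, zpow_one]
  push_cast
  ring_nf

lemma DIset_right (J : DI) :
    DIset (DIright J) = Ico ((2:ℝ)^J.1 * J.2 + DIlen J / 2) ((2:ℝ)^J.1 * J.2 + DIlen J) := by
  rw [DIset_eq_Ico, DIlen_right, DIright, DIlen, zpow_sub₀ two_ne_zero, zpow_one]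
  push_cast
  ring_nf

lemma DIset_left_union_right (J : DI) : DIset (DIleft J) ∪ DIset (DIright J) = DIset J := by
  have := DIlen_pos J
  rw [DIset_left, DIset_right, DIset_eq_Ico, Ico_union_Ico_eq_Ico] <;> linarith

lemma disjoint_DIset_left_right (J : DI) : Disjoint (DIset (DIleft J)) (DIset (DIright J)) := by
  rw [DIset_left, DIset_right]
  exact Ico_disjoint_Ico_same

lemma DIsub_left (J : DI) : DIsub (DIleft J) J := by
  rw [DIsub, ← DIset_left_union_right J]
  exact subset_union_left

lemma DIsub_right (J : DI) : DIsub (DIright J) J := by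
  rw [DIsub, ← DIset_left_union_right J]
  exact subset_union_right

lemma DIsub_iff {I J : DI} : DIsub I J ↔ (2:ℝ)^J.1 * J.2 ≤ (2:ℝ)^I.1 * I.2 ∧
    (2:ℝ)^I.1 * I.2 + DIlen I ≤ (2:ℝ)^J.1 * J.2 + DIlen J := by
  rw [DIsub, DIset_eq_Ico, DIset_eq_Ico,
    Ico_subset_Ico_iff (lt_add_of_pos_right _ (DIlen_pos I))]

lemma DIsub.fst_le {I J : DI} (h : DIsub I J) : I.1 ≤ J.1 := by
  obtain ⟨h₁, h₂⟩ := DIsub_iff.1 h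
  exact (zpow_le_zpow_iff_right₀ (by norm_num : (1:ℝ) < 2)).1 (by rw [DIlen, DIlen] at h₂; linarith)

lemma DIsub.eq_of_fst_le {I J : DI} (h : DIsub I J) (hle : J.1 ≤ I.1) : I = J := by
  have hfst : I.1 = J.1 := le_antisymm h.fst_le hle
  obtain ⟨h₁, h₂⟩ := DIsub_iff.1 h
  rw [DIlen, DIlen, hfst] at h₂
  rw [hfst] at h₁
  have hsnd : (2:ℝ)^J.1 * I.2 = (2:ℝ)^J.1 * J.2 := by linarith
  exact Prod.ext hfst (by exact_mod_cast mul_left_cancel₀ (DIlen_pos J).ne' hsnd)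

/-- The midpoint of `J` is an integer multiple of the length of any strictly smaller dyadic
interval, so such an interval cannot straddle it. -/
lemma DIsub.left_or_right {I J : DI} (h : DIsub I J) (hlt : I.1 < J.1) :
    DIsub I (DIleft J) ∨ DIsub I (DIright J) := by
  obtain ⟨d, hd⟩ : ∃ d : ℕ, J.1 - 1 = I.1 + d := ⟨(J.1 - 1 - I.1).toNat, by omega⟩
  have hmid : (2:ℝ)^J.1 * J.2 + DIlen J / 2 = (2:ℝ)^I.1 * (2 ^ d * (2 * J.2 + 1) : ℤ) := by
    have : (2:ℝ)^J.1 = 2 * ((2:ℝ)^I.1 * 2 ^ d) := by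
      rw [← zpow_natCast, ← zpow_add₀ two_ne_zero, ← hd, zpow_sub₀ two_ne_zero, zpow_one]
      ring
    rw [DIlen, this]
    push_cast
    ring
  obtain ⟨h₁, h₂⟩ := DIsub_iff.1 h
  have hI := DIlen_pos I
  rw [DIlen] at hI
  rcases lt_or_ge I.2 (2 ^ d * (2 * J.2 + 1)) with hc | hc
  · left
    have hc' : ((I.2 + 1 : ℤ) : ℝ) ≤ (2 ^ d * (2 * J.2 + 1) : ℤ) := by exact_mod_cast hc
    rw [DIsub, DIset_left, DIset_eq_Ico,
      Ico_subset_Ico_iff (lt_add_of_pos_right _ (DIlen_pos I)), hmid, DIlen]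
    push_cast at hc' ⊢
    constructor <;> nlinarith
  · right
    have hc' : ((2 ^ d * (2 * J.2 + 1) : ℤ) : ℝ) ≤ I.2 := by exact_mod_cast hc
    rw [DIsub, DIset_right, DIset_eq_Ico,
      Ico_subset_Ico_iff (lt_add_of_pos_right _ (DIlen_pos I)), hmid]
    constructor <;> nlinarith

lemma volume_DIset (I : DI) : volume (DIset I) = ENNReal.ofReal (DIlen I) := by
  rw [DIset_eq_Ico, Real.volume_Ico, add_sub_cancel_left]

lemma volume_DIset_ne_zero (I : DI) : volume (DIset I) ≠ 0 := by
  simp [volume_DIset, DIlen_pos I]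

lemma volume_DIset_ne_top (I : DI) : volume (DIset I) ≠ ⊤ := by
  simp [volume_DIset]

instance (I : DI) : IsFiniteMeasure (volume.restrict (DIset I)) :=
  isFiniteMeasure_restrict.2 (volume_DIset_ne_top I)

lemma avg_eq_setAverage (f : ℝ → ℝ) (I : DI) : avg f I = ⨍ x in DIset I, f x := by
  rw [setAverage_eq, measureReal_def, volume_DIset, ENNReal.toReal_ofReal (DIlen_pos I).le,
    smul_eq_mul, avg]

lemma DIlen_mul_avg (f : ℝ → ℝ) (I : DI) : DIlen I * avg f I = ∫ x in DIset I, f x := by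
  rw [avg, mul_inv_cancel_left₀ (DIlen_pos I).ne']

lemma avg_nonneg {f : ℝ → ℝ} {I : DI} (hf : ∀ᵐ x ∂volume.restrict (DIset I), 0 ≤ f x) :
    0 ≤ avg f I :=
  mul_nonneg (inv_nonneg.2 (DIlen_pos I).le) (integral_nonneg_of_ae hf)

lemma integrableOn_DIset {f : ℝ → ℝ} (hf : LocallyIntegrable f volume) (I : DI) :
    IntegrableOn f (DIset I) :=
  (hf.integrableOn_isCompact isCompact_Icc).mono_set (by rw [DIset]; exact Ico_subset_Icc_self)

lemma setIntegral_DIset_eq_add {f : ℝ → ℝ} {J : DI} (hf : IntegrableOn f (DIset J)) :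
    ∫ x in DIset J, f x = (∫ x in DIset (DIleft J), f x) + ∫ x in DIset (DIright J), f x := by
  rw [← DIset_left_union_right J] at hf ⊢
  exact setIntegral_union (disjoint_DIset_left_right J) measurableSet_Ico
    (hf.mono_set subset_union_left) (hf.mono_set subset_union_right)

lemma sq_setIntegral_DIset_le {g : ℝ → ℝ} {I : DI} (hg : MemLp g 2 (volume.restrict (DIset I))) :
    (∫ x in DIset I, g x) ^ 2 ≤ DIlen I * ∫ x in DIset I, g x ^ 2 := by
  have hjensen := (Even.convexOn_pow even_two).map_set_average_le (continuous_pow 2).continuousOn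
    isClosed_univ (volume_DIset_ne_zero I) (volume_DIset_ne_top I) (ae_of_all _ fun _ => mem_univ _)
    (hg.integrable one_le_two) hg.integrable_sq
  rw [← avg_eq_setAverage, ← avg_eq_setAverage] at hjensen
  rw [← DIlen_mul_avg, ← DIlen_mul_avg]
  have hI := DIlen_pos I
  calc (DIlen I * avg g I) ^ 2 = DIlen I * (DIlen I * avg g I ^ 2) := by ring
    _ ≤ DIlen I * (DIlen I * avg (fun x => g x ^ 2) I) := by gcongr

lemma memLp_two_sqrt {α : Type*} [MeasurableSpace α] {μ : Measure α} {w : α → ℝ}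
    (hw : Integrable w μ) (hpos : ∀ᵐ x ∂μ, 0 ≤ w x) : MemLp (fun x => √(w x)) 2 μ :=
  (memLp_two_iff_integrable_sq (Real.continuous_sqrt.comp_aestronglyMeasurable
    hw.aestronglyMeasurable)).2 (hw.congr (hpos.mono fun _ hx => (Real.sq_sqrt hx).symm))

lemma exp_avg_log_le_sq_avg_sqrt {w : ℝ → ℝ} {I : DI}
    (hpos : ∀ᵐ x ∂volume.restrict (DIset I), 0 < w x)
    (hlog : IntegrableOn (fun x => Real.log (w x)) (DIset I))
    (hsqrt : IntegrableOn (fun x => √(w x)) (DIset I)) :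
    Real.exp (avg (fun x => Real.log (w x)) I) ≤ avg (fun x => √(w x)) I ^ 2 := by
  have hexp : (fun x => √(w x)) =ᵐ[volume.restrict (DIset I)]
      fun x => Real.exp (Real.log (w x) / 2) :=
    hpos.mono fun x hx => by
      dsimp only
      rw [Real.sqrt_eq_rpow, Real.rpow_def_of_pos hx, one_div, div_eq_mul_inv]
  have hjensen := convexOn_exp.map_set_average_le Real.continuous_exp.continuousOn isClosed_univ
    (volume_DIset_ne_zero I) (volume_DIset_ne_top I) (ae_of_all _ fun _ => mem_univ _)
    (hlog.div_const 2) (hsqrt.congr hexp)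
  rw [← avg_eq_setAverage, ← avg_eq_setAverage] at hjensen
  have havg : avg (fun x => Real.log (w x) / 2) I = avg (fun x => Real.log (w x)) I / 2 := by
    rw [avg, avg, integral_div, mul_div_assoc]
  have hsqrt_avg : avg (fun x => Real.exp (Real.log (w x) / 2)) I = avg (fun x => √(w x)) I := by
    rw [avg, avg, integral_congr_ae hexp]
  rw [havg, hsqrt_avg] at hjensen
  calc Real.exp (avg (fun x => Real.log (w x)) I)
      = Real.exp (avg (fun x => Real.log (w x)) I / 2) ^ 2 := by
        rw [← Real.exp_nat_mul]; ring_nf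
    _ ≤ _ := by gcongr

lemma add_sq_div_add_le {x y p q : ℝ} (hp : 0 < p) (hq : 0 < q) :
    (x + y) ^ 2 / (p + q) ≤ x ^ 2 / p + y ^ 2 / q := by
  rw [div_add_div _ _ hp.ne' hq.ne', div_le_div_iff₀ (by positivity) (by positivity)]
  nlinarith [sq_nonneg (x * q - y * p)]

lemma mul_div_sq_add_div_le {ℓ s R G : ℝ} (hℓ : 0 < ℓ) (hs : 0 ≤ s) (hR : 0 ≤ R)
    (hsR : s + R ≤ ℓ) : s * (G / ℓ) ^ 2 + 4 * G ^ 2 / (ℓ + (s + R)) ≤ 4 * G ^ 2 / (ℓ + R) := by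
  have key : s / ℓ ^ 2 ≤ 4 / (ℓ + R) - 4 / (ℓ + (s + R)) := by
    rw [div_sub_div _ _ (by positivity) (by positivity),
      div_le_div_iff₀ (by positivity) (by positivity)]
    have h : (ℓ + R) * (ℓ + (s + R)) ≤ 4 * ℓ ^ 2 := by nlinarith
    nlinarith [mul_le_mul_of_nonneg_left h hs]
  calc s * (G / ℓ) ^ 2 + 4 * G ^ 2 / (ℓ + (s + R))
      = G ^ 2 * (s / ℓ ^ 2 + 4 / (ℓ + (s + R))) := by ring
    _ ≤ G ^ 2 * (4 / (ℓ + R)) := by gcongr; linarith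
    _ = 4 * G ^ 2 / (ℓ + R) := by ring

/-- `ℓ = |J|`, `s = λ_J`, and `S`, `G`, `T`, `E` stand for `Σ λ_I`, `∫ g`, `Σ λ_I (m_I g)²`, `∫ g²`
over the left (`l`) and right (`r`) halves of `J`. -/
lemma bellman_step {ℓ s Sl Sr Gl Gr Tl Tr El Er : ℝ} (hℓ : 0 < ℓ) (hs : 0 ≤ s) (hSl : 0 ≤ Sl)
    (hSr : 0 ≤ Sr) (hS : s + (Sl + Sr) ≤ ℓ)
    (hl : Tl + 4 * Gl ^ 2 / (ℓ / 2 + Sl) ≤ 4 * El) (hr : Tr + 4 * Gr ^ 2 / (ℓ / 2 + Sr) ≤ 4 * Er) :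
    s * ((Gl + Gr) / ℓ) ^ 2 + (Tl + Tr) + 4 * (Gl + Gr) ^ 2 / (ℓ + (s + (Sl + Sr)))
      ≤ 4 * (El + Er) := by
  have h₁ := mul_div_sq_add_div_le (G := Gl + Gr) hℓ hs (add_nonneg hSl hSr) hS
  have h₂ := add_sq_div_add_le (x := Gl) (y := Gr) (p := ℓ / 2 + Sl) (q := ℓ / 2 + Sr)
    (by positivity) (by positivity)
  rw [show ℓ + (Sl + Sr) = ℓ / 2 + Sl + (ℓ / 2 + Sr) by ring] at h₁
  simp only [mul_div_assoc] at h₁ hl hr ⊢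
  linarith

section Carleson

variable {lam : DI → ℝ} {g : ℝ → ℝ}

lemma bellman_ineq (hlam : ∀ I, 0 ≤ lam I)
    (hCarl : ∀ (J : DI) (F : Finset DI), (∀ I ∈ F, DIsub I J) → ∑ I ∈ F, lam I ≤ DIlen J)
    (n : ℕ) {J : DI} (hg : MemLp g 2 (volume.restrict (DIset J))) {F : Finset DI}
    (hF : ∀ I ∈ F, DIsub I J) (hdepth : ∀ I ∈ F, J.1 < I.1 + n) :
    ∑ I ∈ F, lam I * avg g I ^ 2 + 4 * (∫ x in DIset J, g x) ^ 2 / (DIlen J + ∑ I ∈ F, lam I)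
      ≤ 4 * ∫ x in DIset J, g x ^ 2 := by
  induction n generalizing J F with
  | zero =>
    obtain rfl : F = ∅ := Finset.eq_empty_of_forall_notMem fun I hI => by
      have := (hF I hI).fst_le
      have := hdepth I hI
      omega
    have hCS := sq_setIntegral_DIset_le hg
    rw [Finset.sum_empty, Finset.sum_empty, zero_add, add_zero, mul_div_assoc]
    gcongr
    rw [div_le_iff₀ (DIlen_pos J)]
    linarith
  | succ n ih =>
    classical
    set F₀ := F.filter (· = J)
    set Fl := F.filter (fun I => I ≠ J ∧ DIsub I (DIleft J))
    set Fr := F.filter (fun I => I ≠ J ∧ ¬DIsub I (DIleft J))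
    have hsplit (h : DI → ℝ) :
        ∑ I ∈ F, h I = ∑ I ∈ F₀, h I + (∑ I ∈ Fl, h I + ∑ I ∈ Fr, h I) := by
      rw [← Finset.sum_filter_add_sum_filter_not F (· = J),
        ← Finset.sum_filter_add_sum_filter_not (F.filter (¬· = J)) (DIsub · (DIleft J)),
        Finset.filter_filter, Finset.filter_filter]
    have hFl : ∀ I ∈ Fl, DIsub I (DIleft J) := fun I hI => (Finset.mem_filter.1 hI).2.2
    have hFr : ∀ I ∈ Fr, DIsub I (DIright J) := fun I hI => by
      obtain ⟨hIF, hne, hnl⟩ := Finset.mem_filter.1 hI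
      have hlt : I.1 < J.1 :=
        lt_of_le_of_ne (hF I hIF).fst_le fun h => hne ((hF I hIF).eq_of_fst_le h.ge)
      exact ((hF I hIF).left_or_right hlt).resolve_left hnl
    have hdepth' : ∀ I ∈ F, J.1 - 1 < I.1 + n := fun I hI => by
      have := hdepth I hI
      push_cast at this
      omega
    have ihl := ih (hg.mono_measure (Measure.restrict_mono (DIsub_left J) le_rfl))
      hFl (fun I hI => hdepth' I (Finset.mem_filter.1 hI).1)
    have ihr := ih (hg.mono_measure (Measure.restrict_mono (DIsub_right J) le_rfl))
      hFr (fun I hI => hdepth' I (Finset.mem_filter.1 hI).1)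
    have hF₀ : ∑ I ∈ F₀, lam I * avg g I ^ 2 = (∑ I ∈ F₀, lam I) * avg g J ^ 2 := by
      rw [Finset.sum_mul]
      exact Finset.sum_congr rfl fun I hI => by rw [(Finset.mem_filter.1 hI).2]
    have hCarlJ := hCarl J F hF
    rw [hsplit] at hCarlJ
    rw [DIlen_left] at ihl
    rw [DIlen_right] at ihr
    rw [hsplit, hsplit lam, hF₀, avg, inv_mul_eq_div,
      setIntegral_DIset_eq_add (hg.integrable one_le_two),
      setIntegral_DIset_eq_add hg.integrable_sq]
    have hnonneg (G : Finset DI) : 0 ≤ ∑ I ∈ G, lam I := Finset.sum_nonneg fun I _ => hlam I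
    exact bellman_step (DIlen_pos J) (hnonneg _) (hnonneg _) (hnonneg _) hCarlJ ihl ihr

theorem carleson_embedding (hlam : ∀ I, 0 ≤ lam I) {Q : ℝ} (hQ : 0 < Q)
    (hCarl : ∀ (J : DI) (F : Finset DI), (∀ I ∈ F, DIsub I J) →
      (DIlen J)⁻¹ * ∑ I ∈ F, lam I ≤ Q)
    {J : DI} (hg : MemLp g 2 (volume.restrict (DIset J))) {F : Finset DI}
    (hF : ∀ I ∈ F, DIsub I J) :
    ∑ I ∈ F, lam I * avg g I ^ 2 ≤ 4 * Q * ∫ x in DIset J, g x ^ 2 := by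
  obtain ⟨n, hn⟩ : ∃ n : ℕ, ∀ I ∈ F, J.1 < I.1 + n :=
    ⟨F.sup fun I => (J.1 - I.1 + 1).toNat, fun I hI => by
      have := Finset.le_sup (f := fun I => (J.1 - I.1 + 1).toNat) hI
      omega⟩
  have hlamQ (I : DI) : 0 ≤ lam I / Q := div_nonneg (hlam I) hQ.le
  have hCarlQ (K : DI) (G : Finset DI) (hG : ∀ I ∈ G, DIsub I K) :
      ∑ I ∈ G, lam I / Q ≤ DIlen K := by
    have := hCarl K G hG
    rw [← Finset.sum_div, div_le_iff₀ hQ]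
    rwa [inv_mul_le_iff₀ (DIlen_pos K)] at this
  have hbell := bellman_ineq hlamQ hCarlQ n hg hF hn
  have hrem : 0 ≤ 4 * (∫ x in DIset J, g x) ^ 2 / (DIlen J + ∑ I ∈ F, lam I / Q) := by
    have := Finset.sum_nonneg fun I (_ : I ∈ F) => hlamQ I
    have := DIlen_pos J
    positivity
  calc ∑ I ∈ F, lam I * avg g I ^ 2 = Q * ∑ I ∈ F, lam I / Q * avg g I ^ 2 := by
        rw [Finset.mul_sum]
        exact Finset.sum_congr rfl fun I _ => by field_simp
    _ ≤ Q * (4 * ∫ x in DIset J, g x ^ 2) := by gcongr; linarith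
    _ = 4 * Q * ∫ x in DIset J, g x ^ 2 := by ring

theorem sum_exp_avg_log_mul_le {w : ℝ → ℝ} (hpos : ∀ᵐ x, 0 < w x)
    (hw : LocallyIntegrable w volume) (hlog : LocallyIntegrable (fun x => Real.log (w x)) volume)
    (hlam : ∀ I, 0 ≤ lam I) {Q : ℝ} (hQ : 0 < Q)
    (hCarl : ∀ (J : DI) (F : Finset DI), (∀ I ∈ F, DIsub I J) →
      (DIlen J)⁻¹ * ∑ I ∈ F, lam I ≤ Q)
    {J : DI} {F : Finset DI} (hF : ∀ I ∈ F, DIsub I J) :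
    (DIlen J)⁻¹ * ∑ I ∈ F, Real.exp (avg (fun x => Real.log (w x)) I) * lam I
      ≤ 4 * Q * avg w J := by
  have hsqrt (K : DI) : MemLp (fun x => √(w x)) 2 (volume.restrict (DIset K)) :=
    memLp_two_sqrt (integrableOn_DIset hw K) (ae_restrict_of_ae (hpos.mono fun _ hx => hx.le))
  have hsq_int : ∫ x in DIset J, √(w x) ^ 2 = DIlen J * avg w J := by
    rw [DIlen_mul_avg]
    exact integral_congr_ae (ae_restrict_of_ae (hpos.mono fun _ hx => Real.sq_sqrt hx.le))
  have hJ := DIlen_pos J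
  calc (DIlen J)⁻¹ * ∑ I ∈ F, Real.exp (avg (fun x => Real.log (w x)) I) * lam I
      ≤ (DIlen J)⁻¹ * ∑ I ∈ F, lam I * avg (fun x => √(w x)) I ^ 2 := by
        gcongr (DIlen J)⁻¹ * ?_
        refine Finset.sum_le_sum fun I _ => ?_
        rw [mul_comm]
        exact mul_le_mul_of_nonneg_left (exp_avg_log_le_sq_avg_sqrt (ae_restrict_of_ae hpos)
          (integrableOn_DIset hlog I) ((hsqrt I).integrable one_le_two)) (hlam I)
    _ ≤ (DIlen J)⁻¹ * (4 * Q * (DIlen J * avg w J)) := by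
        gcongr
        rw [← hsq_int]
        exact carleson_embedding hlam hQ hCarl (hsqrt J) hF
    _ = 4 * Q * avg w J := by field_simp

end Carleson

/-- Sums over `D(J)` are taken over arbitrary finite subfamilies of `D(J)`, which is equivalent
since all summands are nonnegative; `[w]_{A∞^d}` is represented by any upper bound `Ainf` of
`m_I w · exp (-m_I (log w))`. -/
theorem carleson_lemma_Ainfty (w : ℝ → ℝ) (hw : IsWeight w)
    (hlog : LocallyIntegrable (fun x => Real.log (w x)) volume)
    (lam : DI → ℝ) (hlam : ∀ I, 0 ≤ lam I)
    (Q : ℝ) (hQ : 0 < Q)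
    (hCarl : ∀ (J : DI) (F : Finset DI), (∀ I ∈ F, DIsub I J) →
      (DIlen J)⁻¹ * ∑ I ∈ F, lam I ≤ Q) :
    (∀ (J : DI) (F : Finset DI), (∀ I ∈ F, DIsub I J) →
      (DIlen J)⁻¹ * ∑ I ∈ F, Real.exp (avg (fun x => Real.log (w x)) I) * lam I
        ≤ 4 * Q * avg w J)
    ∧
    (∀ Ainf : ℝ,
      (∀ I : DI, avg w I * Real.exp (-(avg (fun x => Real.log (w x)) I)) ≤ Ainf) →
      ∀ (J : DI) (F : Finset DI), (∀ I ∈ F, DIsub I J) →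
        (DIlen J)⁻¹ * ∑ I ∈ F, avg w I * lam I ≤ 4 * Q * Ainf * avg w J) := by
  obtain ⟨-, hpos, hloc⟩ := hw
  have hgeom (J : DI) (F : Finset DI) (hF : ∀ I ∈ F, DIsub I J) :=
    sum_exp_avg_log_mul_le hpos hloc hlog hlam hQ hCarl hF
  refine ⟨hgeom, fun Ainf hAinf J F hF => ?_⟩
  have hAinf_nonneg : 0 ≤ Ainf := le_trans (mul_nonneg
    (avg_nonneg (ae_restrict_of_ae (hpos.mono fun _ hx => hx.le))) (Real.exp_nonneg _)) (hAinf 0)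
  have havg_le (I : DI) : avg w I ≤ Ainf * Real.exp (avg (fun x => Real.log (w x)) I) := by
    rw [← div_le_iff₀ (Real.exp_pos _), div_eq_mul_inv, ← Real.exp_neg]
    exact hAinf I
  have hJ := DIlen_pos J
  calc (DIlen J)⁻¹ * ∑ I ∈ F, avg w I * lam I
      ≤ (DIlen J)⁻¹ * ∑ I ∈ F, Ainf * (Real.exp (avg (fun x => Real.log (w x)) I) * lam I) := by
        gcongr (DIlen J)⁻¹ * ?_
        refine Finset.sum_le_sum fun I _ => ?_
        rw [← mul_assoc]
        exact mul_le_mul_of_nonneg_right (havg_le I) (hlam I)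
    _ = Ainf * ((DIlen J)⁻¹ * ∑ I ∈ F, Real.exp (avg (fun x => Real.log (w x)) I) * lam I) := by
        rw [← Finset.mul_sum]; ring
    _ ≤ Ainf * (4 * Q * avg w J) := by gcongr Ainf * ?_; exact hgeom J F hF
    _ = 4 * Q * Ainf * avg w J := by ring
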